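/- (Reduction Lemma, part 1.) Let G be a locally finite connected simple graph and (x,y) an edge of G. Let Δ_G(x,y) = N(x) ∩ N(y), let P_G(x,y) = {v : d_G(x,v) = d_G(y,v) = 2}, and let H be the subgraph of G induced by the vertex set N(x) ∪ N(y) ∪ P_G(x,y). Then κ_G(x,y) = κ_H(x,y), i.e., the Ricci curvature of the edge (x,y) computed in G equals that computed in the induced subgraph H. -/

import Mathlib

open SimpleGraph

/-- `f` is 1-Lipschitz with respect to the shortest-path metric (the constraint
binding for pairs of vertices joined by a path). -/
def Lip {V : Type*} (G : SimpleGraph V) (f : V → ℝ) : Prop :=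
  ∀ a b : V, G.Reachable a b → |f a - f b| ≤ (G.dist a b : ℝ)

noncomputable def deg {V : Type*} (G : SimpleGraph V) (x : V) : ℕ :=
  (G.neighborSet x).ncard

noncomputable def Ef {V : Type*} (G : SimpleGraph V) (x : V) (f : V → ℝ) : ℝ :=
  (∑ᶠ z ∈ G.neighborSet x, f z) / (deg G x)

noncomputable def kappa {V : Type*} (G : SimpleGraph V) (x y : V) : ℝ :=
  1 - sSup {t : ℝ | ∃ f : V → ℝ, Lip G f ∧ t = Ef G x f - Ef G y f}

/-- The vertex set `N(x) ∪ N(y) ∪ P_G(x,y)` of the core neighbourhood, where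
`P_G(x,y)` is the set of vertices at distance 2 from both `x` and `y`. -/
def coreSet {V : Type*} (G : SimpleGraph V) (x y : V) : Set V :=
  G.neighborSet x ∪ G.neighborSet y ∪ {v | G.dist x v = 2 ∧ G.dist y v = 2}

section lemmas
variable {V : Type*} {G : SimpleGraph V} {s : Set V}

lemma reach_of_induce {u v : s} (h : (G.induce s).Reachable u v) : G.Reachable ↑u ↑v :=
  h.map (Embedding.induce s).toHom

lemma dist_le_induce {u v : s} (h : (G.induce s).Reachable u v) :
    G.dist ↑u ↑v ≤ (G.induce s).dist u v := by
  obtain ⟨p, hp⟩ := h.exists_walk_length_eq_dist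
  calc G.dist ↑u ↑v ≤ (p.map (Embedding.induce s).toHom).length := SimpleGraph.dist_le _
    _ = p.length := Walk.length_map _ _
    _ = _ := hp

lemma neighborSet_induce_val (x : V) (hx : x ∈ s) (hsub : G.neighborSet x ⊆ s) :
    Subtype.val '' ((G.induce s).neighborSet ⟨x, hx⟩) = G.neighborSet x := by
  ext w
  simp only [Set.mem_image, mem_neighborSet, comap_adj, Function.Embedding.coe_subtype]
  constructor
  · rintro ⟨⟨w', hw'⟩, ha, rfl⟩; exact ha
  · intro h; exact ⟨⟨w, hsub h⟩, h, rfl⟩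

lemma Ef_induce (x : V) (hx : x ∈ s) (hsub : G.neighborSet x ⊆ s) (f : V → ℝ) :
    Ef (G.induce s) ⟨x, hx⟩ (fun v => f ↑v) = Ef G x f := by
  have himg := neighborSet_induce_val (G := G) x hx hsub
  have hinj : ((G.induce s).neighborSet ⟨x, hx⟩).InjOn Subtype.val :=
    Set.injOn_of_injective Subtype.val_injective
  unfold Ef deg
  rw [← himg, finsum_mem_image hinj, Set.ncard_image_of_injective _ Subtype.val_injective]
end lemmas

section core
variable {V : Type*} {G : SimpleGraph V}

lemma mem_core_of_dist_le (hG : G.Connected) {x y w : V} (hxy : G.Adj x y)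
    (hx2 : G.dist x w ≤ 2) (hy2 : G.dist y w ≤ 2) : w ∈ coreSet G x y := by
  rcases Nat.lt_or_ge (G.dist x w) 2 with h | h
  · interval_cases h' : G.dist x w
    · have : x = w := (hG.dist_eq_zero_iff).mp h'
      exact this ▸ Or.inl (Or.inr hxy.symm)
    · exact Or.inl (Or.inl (dist_eq_one_iff_adj.mp h'))
  · have hx : G.dist x w = 2 := le_antisymm hx2 h
    rcases Nat.lt_or_ge (G.dist y w) 2 with h' | h'
    · interval_cases h'' : G.dist y w
      · have : y = w := (hG.dist_eq_zero_iff).mp h''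
        exact this ▸ Or.inl (Or.inl hxy)
      · exact Or.inl (Or.inr (dist_eq_one_iff_adj.mp h''))
    · exact Or.inr ⟨hx, le_antisymm hy2 h'⟩

lemma core_dist (hG : G.Connected) {x y u v : V} (hxy : G.Adj x y)
    (hu : u ∈ G.neighborSet x ∪ G.neighborSet y) (hv : v ∈ G.neighborSet x ∪ G.neighborSet y)
    (hus : u ∈ coreSet G x y) (hvs : v ∈ coreSet G x y) :
    (G.induce (coreSet G x y)).Reachable ⟨u, hus⟩ ⟨v, hvs⟩ ∧
      (G.induce (coreSet G x y)).dist ⟨u, hus⟩ ⟨v, hvs⟩ ≤ G.dist u v := by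
  set H := G.induce (coreSet G x y) with hH
  have hxs : x ∈ coreSet G x y := Or.inl (Or.inr hxy.symm)
  have hys : y ∈ coreSet G x y := Or.inl (Or.inl hxy)
  have hadj : ∀ {a b : V} (ha : a ∈ coreSet G x y) (hb : b ∈ coreSet G x y),
      G.Adj a b → H.Adj ⟨a, ha⟩ ⟨b, hb⟩ := by
    intro a b ha hb h
    simpa [hH] using h
  have hr : ∀ (a : V) (ha : a ∈ G.neighborSet x ∪ G.neighborSet y) (has : a ∈ coreSet G x y),
      H.Reachable ⟨a, has⟩ ⟨x, hxs⟩ := by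
    intro a ha has
    rcases ha with h | h
    · exact (hadj has hxs h.symm).reachable
    · exact ((hadj has hys h.symm).reachable).trans (hadj hys hxs hxy.symm).reachable
  refine ⟨(hr u hu hus).trans (hr v hv hvs).symm, ?_⟩
  by_cases hd0 : G.dist u v = 0
  · have : u = v := (hG.dist_eq_zero_iff).mp hd0
    subst this
    simp [SimpleGraph.dist_self]
  by_cases hd1 : G.dist u v = 1
  · rw [hd1, Nat.le_iff_lt_or_eq]
    right
    exact dist_eq_one_iff_adj.mpr (hadj hus hvs (dist_eq_one_iff_adj.mp hd1))
  by_cases hd2 : G.dist u v = 2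
  · rw [hd2]
    rcases hu with hu1 | hu1 <;> rcases hv with hv1 | hv1
    · -- both in N(x)
      simpa using SimpleGraph.dist_le
        (Walk.cons (hadj hus hxs hu1.symm) (Walk.cons (hadj hxs hvs hv1) Walk.nil))
    · -- u ∈ N(x), v ∈ N(y): midpoint
      obtain ⟨p, hp⟩ := (hG u v).exists_walk_length_eq_dist
      rw [hd2] at hp
      cases p with
      | nil => simp at hp
      | cons h q =>
        rename_i a
        cases q with
        | nil => simp at hp
        | cons h' q' =>
          rename_i b
          simp only [Walk.length_cons] at hp
          have hb : b = v := q'.eq_of_length_eq_zero (by omega)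
          rw [hb] at h'
          have hxa : G.dist x a ≤ 2 := by
            calc G.dist x a ≤ G.dist x u + G.dist u a := hG.dist_triangle
              _ ≤ 1 + 1 := by
                gcongr <;> exact (dist_eq_one_iff_adj.mpr (by assumption)).le
          have hya : G.dist y a ≤ 2 := by
            calc G.dist y a ≤ G.dist y v + G.dist v a := hG.dist_triangle
              _ ≤ 1 + 1 := by
                refine Nat.add_le_add ?_ ?_
                · exact (dist_eq_one_iff_adj.mpr hv1).le
                · exact (dist_eq_one_iff_adj.mpr h'.symm).le
          have has : a ∈ coreSet G x y := mem_core_of_dist_le hG hxy hxa hya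
          simpa using SimpleGraph.dist_le
            (Walk.cons (hadj hus has h) (Walk.cons (hadj has hvs h') Walk.nil))
    · -- u ∈ N(y), v ∈ N(x): midpoint
      obtain ⟨p, hp⟩ := (hG u v).exists_walk_length_eq_dist
      rw [hd2] at hp
      cases p with
      | nil => simp at hp
      | cons h q =>
        rename_i a
        cases q with
        | nil => simp at hp
        | cons h' q' =>
          rename_i b
          simp only [Walk.length_cons] at hp
          have hb : b = v := q'.eq_of_length_eq_zero (by omega)
          rw [hb] at h'
          have hxa : G.dist x a ≤ 2 := by
            calc G.dist x a ≤ G.dist x v + G.dist v a := hG.dist_triangle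
              _ ≤ 1 + 1 := by
                refine Nat.add_le_add ?_ ?_
                · exact (dist_eq_one_iff_adj.mpr hv1).le
                · exact (dist_eq_one_iff_adj.mpr h'.symm).le
          have hya : G.dist y a ≤ 2 := by
            calc G.dist y a ≤ G.dist y u + G.dist u a := hG.dist_triangle
              _ ≤ 1 + 1 := by
                refine Nat.add_le_add ?_ ?_
                · exact (dist_eq_one_iff_adj.mpr hu1).le
                · exact (dist_eq_one_iff_adj.mpr h).le
          have has : a ∈ coreSet G x y := mem_core_of_dist_le hG hxy hxa hya
          simpa using SimpleGraph.dist_le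
            (Walk.cons (hadj hus has h) (Walk.cons (hadj has hvs h') Walk.nil))
    · -- both in N(y)
      simpa using SimpleGraph.dist_le
        (Walk.cons (hadj hus hys hu1.symm) (Walk.cons (hadj hys hvs hv1) Walk.nil))
  · -- G.dist u v ≥ 3; H.dist ≤ 3 always
    have h3 : H.dist ⟨u, hus⟩ ⟨v, hvs⟩ ≤ 3 := by
      rcases hu with hu1 | hu1 <;> rcases hv with hv1 | hv1
      · have h2 : H.dist ⟨u, hus⟩ ⟨v, hvs⟩ ≤ 2 := by
          simpa using SimpleGraph.dist_le
            (Walk.cons (hadj hus hxs hu1.symm) (Walk.cons (hadj hxs hvs hv1) Walk.nil))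
        omega
      · simpa using SimpleGraph.dist_le
          (Walk.cons (hadj hus hxs hu1.symm) (Walk.cons (hadj hxs hys hxy)
            (Walk.cons (hadj hys hvs hv1) Walk.nil)))
      · simpa using SimpleGraph.dist_le
          (Walk.cons (hadj hus hys hu1.symm) (Walk.cons (hadj hys hxs hxy.symm)
            (Walk.cons (hadj hxs hvs hv1) Walk.nil)))
      · have h2 : H.dist ⟨u, hus⟩ ⟨v, hvs⟩ ≤ 2 := by
          simpa using SimpleGraph.dist_le
            (Walk.cons (hadj hus hys hu1.symm) (Walk.cons (hadj hys hvs hv1) Walk.nil))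
        omega
    exact h3.trans (by omega)

end core

/-- **Reduction lemma, part 1.** The Ricci curvature of an edge `(x,y)` of a locally
finite connected graph `G` equals the Ricci curvature of that edge computed in the
subgraph induced by `N(x) ∪ N(y) ∪ P_G(x,y)`. -/
theorem reduction_lemma_induced {V : Type*} (G : SimpleGraph V)
    (hlf : ∀ v : V, (G.neighborSet v).Finite) (hG : G.Connected)
    (x y : V) (hxy : G.Adj x y) :
    kappa G x y =
      kappa (G.induce (coreSet G x y))
        ⟨x, Or.inl (Or.inr hxy.symm)⟩ ⟨y, Or.inl (Or.inl hxy)⟩ := by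
  classical
  have hNx : G.neighborSet x ⊆ coreSet G x y := fun w hw => Or.inl (Or.inl hw)
  have hNy : G.neighborSet y ⊆ coreSet G x y := fun w hw => Or.inl (Or.inr hw)
  have hNN : G.neighborSet x ∪ G.neighborSet y ⊆ coreSet G x y := Set.union_subset hNx hNy
  unfold kappa
  congr 2
  ext t
  simp only [Set.mem_setOf_eq]
  constructor
  · rintro ⟨f, hf, rfl⟩
    refine ⟨fun v => f ↑v, ?_, ?_⟩
    · intro a b hab
      calc |f ↑a - f ↑b| ≤ (G.dist ↑a ↑b : ℝ) := hf _ _ (reach_of_induce hab)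
        _ ≤ _ := by exact_mod_cast dist_le_induce hab
    · exact (congrArg₂ (· - ·) (Ef_induce x _ hNx f) (Ef_induce y _ hNy f)).symm
  · rintro ⟨g, hg, rfl⟩
    set T : Finset V := (hlf x).toFinset ∪ (hlf y).toFinset with hT
    have hTmem : ∀ u ∈ T, u ∈ G.neighborSet x ∪ G.neighborSet y := by
      intro u hu
      rcases Finset.mem_union.mp hu with h | h
      · exact Or.inl ((hlf x).mem_toFinset.mp h)
      · exact Or.inr ((hlf y).mem_toFinset.mp h)
    have hmemT : ∀ v ∈ G.neighborSet x ∪ G.neighborSet y, v ∈ T := by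
      intro v hv
      rcases hv with h | h
      · exact Finset.mem_union_left _ ((hlf x).mem_toFinset.mpr h)
      · exact Finset.mem_union_right _ ((hlf y).mem_toFinset.mpr h)
    have hTne : T.attach.Nonempty := by
      rw [Finset.attach_nonempty_iff]
      exact ⟨y, Finset.mem_union_left _ ((hlf x).mem_toFinset.mpr hxy)⟩
    set F : V → ℝ := fun v =>
      T.attach.inf' hTne (fun u => g ⟨u.1, hNN (hTmem u.1 u.2)⟩ + (G.dist u.1 v : ℝ))
      with hF
    have hFle : ∀ (a b : V), F a ≤ F b + (G.dist b a : ℝ) := by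
      intro a b
      obtain ⟨u0, hu0, hFb⟩ := Finset.exists_mem_eq_inf' hTne
        (fun u => g ⟨u.1, hNN (hTmem u.1 u.2)⟩ + (G.dist u.1 b : ℝ))
      have h1 : F a ≤ g ⟨u0.1, hNN (hTmem u0.1 u0.2)⟩ + (G.dist u0.1 a : ℝ) :=
        Finset.inf'_le _ hu0
      have h2 : (G.dist u0.1 a : ℝ) ≤ (G.dist u0.1 b : ℝ) + (G.dist b a : ℝ) := by
        exact_mod_cast hG.dist_triangle
      have h3 : F b = g ⟨u0.1, hNN (hTmem u0.1 u0.2)⟩ + (G.dist u0.1 b : ℝ) := hFb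
      linarith
    have hLipF : Lip G F := by
      intro a b _
      rw [abs_sub_le_iff]
      constructor
      · have := hFle a b
        rw [SimpleGraph.dist_comm] at this
        linarith
      · have := hFle b a
        linarith
    have hFeq : ∀ v (hv : v ∈ G.neighborSet x ∪ G.neighborSet y), F v = g ⟨v, hNN hv⟩ := by
      intro v hv
      apply le_antisymm
      · have h1 : F v ≤ g ⟨v, hNN (hTmem v (hmemT v hv))⟩ + (G.dist v v : ℝ) :=
          Finset.inf'_le _ (Finset.mem_attach _ ⟨v, hmemT v hv⟩)
        simpa [SimpleGraph.dist_self] using h1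
      · apply Finset.le_inf'
        rintro ⟨u, hu⟩ -
        have hcd := core_dist hG hxy hv (hTmem u hu) (hNN hv) (hNN (hTmem u hu))
        have hlip := hg _ _ hcd.1
        have hdist : ((G.induce (coreSet G x y)).dist ⟨v, hNN hv⟩ ⟨u, hNN (hTmem u hu)⟩ : ℝ)
            ≤ (G.dist u v : ℝ) := by
          rw [SimpleGraph.dist_comm (u := u)]
          exact_mod_cast hcd.2
        have := (abs_sub_le_iff.mp hlip).1
        linarith
    refine ⟨F, hLipF, ?_⟩
    have hx' : ∀ (hx : x ∈ coreSet G x y),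
        Ef (G.induce (coreSet G x y)) ⟨x, hx⟩ g = Ef G x F := by
      intro hx
      rw [← Ef_induce x hx hNx F]
      unfold Ef
      congr 1
      apply finsum_mem_congr rfl
      rintro ⟨z, hz⟩ hmem
      have hzx : z ∈ G.neighborSet x := by
        simpa using hmem
      exact (hFeq z (Or.inl hzx)).symm
    have hy' : ∀ (hy : y ∈ coreSet G x y),
        Ef (G.induce (coreSet G x y)) ⟨y, hy⟩ g = Ef G y F := by
      intro hy
      rw [← Ef_induce y hy hNy F]
      unfold Ef
      congr 1
      apply finsum_mem_congr rfl
      rintro ⟨z, hz⟩ hmem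
      have hzy : z ∈ G.neighborSet y := by
        simpa using hmem
      exact (hFeq z (Or.inr hzy)).symm
    exact congrArg₂ (· - ·) (hx' _) (hy' _)
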